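/- arXiv:math/0301141 — 3 statements merged into one kernel-verified Lean document; each statement's English description precedes it below -/
import Mathlib

section
/- For every integer n ≥ 1, the elements l := x_0^{-2} x_1 x_0^{n+1} x_1^{-n} and r := x_0^2 l of Thompson's group F both have word length exactly 2n + 2 with respect to the generating set {x_0, x_1}. -/
namespace ThompsonF

/-- The defining relators of Thompson's group `F`:
for `i < j`, the relator `x_i⁻¹ * x_j * x_i * x_{j+1}⁻¹`. -/
def rels : Set (FreeGroup ℕ) :=
  {r | ∃ i j : ℕ, i < j ∧
    r = (FreeGroup.of i)⁻¹ * FreeGroup.of j * FreeGroup.of i * (FreeGroup.of (j + 1))⁻¹}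

/-- Thompson's group `F`, presented by `⟨x₀, x₁, … ∣ x_i⁻¹ x_j x_i = x_{j+1} for i < j⟩`. -/
abbrev F : Type := PresentedGroup rels

/-- The generator `x_i` of Thompson's group `F`. -/
def x (i : ℕ) : F := PresentedGroup.of i

/-- The symmetrized generating set `{x₀, x₀⁻¹, x₁, x₁⁻¹}`. -/
def gens : Set F := {x 0, (x 0)⁻¹, x 1, (x 1)⁻¹}

/-- The word length `ℓ(g)` with respect to `{x₀, x₁}`: the least `m` such that `g` is a
product of `m` elements of `{x₀, x₀⁻¹, x₁, x₁⁻¹}`. -/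
noncomputable def len (g : F) : ℕ :=
  sInf {m | ∃ w : List F, w.length = m ∧ (∀ a ∈ w, a ∈ gens) ∧ w.prod = g}

/-- `IsPathIn n f g m c` means `c 0 = f, c 1, …, c m = g` is a path of length `m`
from `f` to `g` inside the ball `B_n`: consecutive vertices differ by left
multiplication by a generator, and every vertex has length at most `n`. -/
def IsPathIn (n : ℕ) (f g : F) (m : ℕ) (c : ℕ → F) : Prop :=
  c 0 = f ∧ c m = g ∧ (∀ k < m, c (k + 1) * (c k)⁻¹ ∈ gens) ∧ ∀ k ≤ m, len (c k) ≤ n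

/-- The element `l = x₀⁻² x₁ x₀^{n+1} x₁⁻ⁿ`. -/
def l (n : ℕ) : F := x 0 ^ (-2 : ℤ) * x 1 * x 0 ^ ((n : ℤ) + 1) * x 1 ^ (-(n : ℤ))

/-- The element `r = x₀² l`. -/
def r (n : ℕ) : F := x 0 ^ 2 * l n

/-! ### The PL model on ℚ -/

def pfun (c : ℚ) (t : ℚ) : ℚ := if t ≤ c then t else if t ≤ c + 2 then (t + c)/2 else t - 1
def qfun (c : ℚ) (t : ℚ) : ℚ := if t ≤ c then t else if t ≤ c + 1 then 2*t - c else t + 1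

def P (c : ℚ) : Equiv.Perm ℚ where
  toFun := pfun c
  invFun := qfun c
  left_inv := by intro t; unfold pfun qfun; split_ifs <;> linarith
  right_inv := by intro t; unfold pfun qfun; split_ifs <;> linarith

def T : Equiv.Perm ℚ where
  toFun := fun t => t - 1
  invFun := fun t => t + 1
  left_inv := by intro t; ring
  right_inv := by intro t; ring

def X : ℕ → Equiv.Perm ℚ := fun i => if i = 0 then T else P ((i : ℚ) - 1)

lemma pfun_comm {c d t : ℚ} (h : d + 1 ≤ c) :
    pfun c (pfun d t) = pfun d (pfun (c+1) t) := by
  unfold pfun; split_ifs <;> linarith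

lemma pfun_shift (c t : ℚ) : pfun (c - 1) (t - 1) = pfun c t - 1 := by
  unfold pfun; split_ifs <;> linarith

lemma pfun_comm' {c d : ℚ} (h : d + 1 ≤ c) (t : ℚ) :
    pfun (c - 1) (pfun (d - 1) t) = pfun (d - 1) (pfun c t) := by
  unfold pfun; split_ifs <;> linarith

lemma X_eq {j : ℕ} (hj : j ≠ 0) : X j = P ((j : ℚ) - 1) := by simp [X, hj]

lemma X_succ_eq (j : ℕ) : X (j+1) = P ((j : ℚ)) := by
  have : (((j:ℕ)+1 : ℕ) : ℚ) - 1 = (j : ℚ) := by push_cast; ring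
  simp [X, this]

lemma X_comm {i j : ℕ} (h : i < j) : X j * X i = X i * X (j+1) := by
  have hj : j ≠ 0 := by omega
  obtain ⟨j', rfl⟩ : ∃ j', j = j' + 1 := ⟨j - 1, by omega⟩
  ext t
  simp only [Equiv.Perm.mul_apply]
  rw [X_eq hj, X_succ_eq (j'+1)]
  rcases Nat.eq_zero_or_pos i with hi | hi
  · subst hi
    have hx0 : X 0 = T := by simp [X]
    rw [hx0]
    exact pfun_shift _ t
  · have hi0 : i ≠ 0 := by omega
    rw [X_eq hi0]
    have h2 : (i:ℚ) + 1 ≤ ((j'+1:ℕ):ℚ) := by exact_mod_cast h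
    exact pfun_comm' h2 t

lemma rels_hold : ∀ rr ∈ rels, FreeGroup.lift X rr = 1 := by
  rintro rr ⟨i, j, hij, rfl⟩
  simp only [map_mul, map_inv, FreeGroup.lift_apply_of]
  have h := X_comm hij
  rw [mul_inv_eq_one, mul_assoc, h, ← mul_assoc, inv_mul_cancel, one_mul]

noncomputable def ρ : F →* Equiv.Perm ℚ := PresentedGroup.toGroup rels_hold

lemma ρ_x (i : ℕ) : ρ (x i) = X i := PresentedGroup.toGroup.of rels_hold

/-! ### Letter evaluation lemmas -/

lemma ρx0 (t : ℚ) : ρ (x 0) t = t - 1 := by rw [ρ_x]; rfl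

lemma ρx0inv (t : ℚ) : ρ ((x 0)⁻¹) t = t + 1 := by rw [map_inv, ρ_x]; rfl

lemma X1_eq : X 1 = P 0 := by
  have h : ((1:ℕ):ℚ) - 1 = 0 := by norm_num
  simp [X, h]

lemma ρx1 (t : ℚ) : ρ (x 1) t = pfun 0 t := by rw [ρ_x, X1_eq]; rfl

lemma ρx1inv (t : ℚ) : ρ ((x 1)⁻¹) t = qfun 0 t := by
  rw [map_inv, ρ_x, X1_eq]; rfl

-- basic facts about the letters as maps
lemma pfun0_le (t : ℚ) : pfun 0 t ≤ t := by unfold pfun; split_ifs <;> linarith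
lemma pfun0_id {t : ℚ} (h : t ≤ 0) : pfun 0 t = t := by unfold pfun; split_ifs <;> linarith
lemma pfun0_fix {t : ℚ} (h : pfun 0 t = t) : t ≤ 0 := by
  by_contra hc; push_neg at hc; revert h; unfold pfun; split_ifs <;> intro h <;> linarith
lemma pfun0_chord {t s : ℚ} (h : t ≤ s) :
    pfun 0 s - pfun 0 t ≤ s - t ∧ 0 ≤ pfun 0 s - pfun 0 t := by
  unfold pfun; split_ifs <;> constructor <;> linarith
lemma qfun0_le (t : ℚ) : qfun 0 t ≤ t + 1 := by unfold qfun; split_ifs <;> linarith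
lemma qfun0_ge (t : ℚ) : t ≤ qfun 0 t := by unfold qfun; split_ifs <;> linarith
lemma qfun0_id {t : ℚ} (h : t ≤ 0) : qfun 0 t = t := by unfold qfun; split_ifs <;> linarith
lemma qfun0_max {t : ℚ} (h : qfun 0 t = t + 1) : 1 ≤ t := by
  by_contra hc; push_neg at hc; revert h; unfold qfun; split_ifs <;> intro h <;> linarith
lemma qfun0_chord {t s : ℚ} (h : t ≤ s) :
    qfun 0 s - qfun 0 t ≤ 2*(s - t) ∧ 0 ≤ qfun 0 s - qfun 0 t := by
  unfold qfun; split_ifs <;> constructor <;> linarith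

/-! ### Distinctness of generators -/

lemma ρx0_0 : ρ (x 0) 0 = -1 := by rw [ρx0]; norm_num
lemma ρx0inv_0 : ρ ((x 0)⁻¹) 0 = 1 := by rw [ρx0inv]; norm_num
lemma ρx1_0 : ρ (x 1) 0 = 0 := by rw [ρx1, pfun0_id le_rfl]
lemma ρx1inv_0 : ρ ((x 1)⁻¹) 0 = 0 := by rw [ρx1inv, qfun0_id le_rfl]
lemma ρx1_1 : ρ (x 1) 1 = 1/2 := by rw [ρx1]; unfold pfun; norm_num
lemma ρx1inv_1 : ρ ((x 1)⁻¹) 1 = 2 := by rw [ρx1inv]; unfold qfun; norm_num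

lemma ne_of_ρ {g h : F} {t : ℚ} (hne : ρ g t ≠ ρ h t) : g ≠ h := by
  intro he; exact hne (by rw [he])

lemma d_a_A : x 0 ≠ (x 0)⁻¹ := ne_of_ρ (t := 0) (by rw [ρx0_0, ρx0inv_0]; norm_num)
lemma d_a_b : x 0 ≠ x 1 := ne_of_ρ (t := 0) (by rw [ρx0_0, ρx1_0]; norm_num)
lemma d_a_B : x 0 ≠ (x 1)⁻¹ := ne_of_ρ (t := 0) (by rw [ρx0_0, ρx1inv_0]; norm_num)
lemma d_A_b : (x 0)⁻¹ ≠ x 1 := ne_of_ρ (t := 0) (by rw [ρx0inv_0, ρx1_0]; norm_num)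
lemma d_A_B : (x 0)⁻¹ ≠ (x 1)⁻¹ := ne_of_ρ (t := 0) (by rw [ρx0inv_0, ρx1inv_0]; norm_num)
lemma d_b_B : x 1 ≠ (x 1)⁻¹ := ne_of_ρ (t := 1) (by rw [ρx1_1, ρx1inv_1]; norm_num)

/-! ### Letter counts -/

open scoped Classical in
noncomputable def cnt (h : F) (w : List F) : ℕ := w.countP (fun g => decide (g = h))

open scoped Classical in
lemma cnt_nil (h : F) : cnt h [] = 0 := rfl

open scoped Classical in
lemma cnt_cons (h g : F) (w : List F) :
    cnt h (g :: w) = cnt h w + (if g = h then 1 else 0) := by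
  simp [cnt, List.countP_cons]

lemma mem_gens {g : F} (h : g ∈ gens) :
    g = x 0 ∨ g = (x 0)⁻¹ ∨ g = x 1 ∨ g = (x 1)⁻¹ := by
  simpa [gens, Set.mem_insert_iff, Set.mem_singleton_iff] using h

lemma length_eq_cnt : ∀ (w : List F), (∀ g ∈ w, g ∈ gens) →
    w.length = cnt (x 0) w + cnt ((x 0)⁻¹) w + cnt (x 1) w + cnt ((x 1)⁻¹) w := by
  intro w
  induction w with
  | nil => intro _; simp [cnt_nil]
  | cons g w ih =>
    intro hmem
    have hg := mem_gens (hmem g (by simp))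
    have hw := ih (fun g hgw => hmem g (by simp [hgw]))
    simp only [List.length_cons, cnt_cons]
    rcases hg with rfl | rfl | rfl | rfl
    · rw [if_pos rfl, if_neg d_a_A, if_neg d_a_b, if_neg d_a_B]; omega
    · rw [if_neg (Ne.symm d_a_A), if_pos rfl, if_neg d_A_b, if_neg d_A_B]; omega
    · rw [if_neg (Ne.symm d_a_b), if_neg (Ne.symm d_A_b), if_pos rfl, if_neg d_b_B]; omega
    · rw [if_neg (Ne.symm d_a_B), if_neg (Ne.symm d_A_B), if_neg (Ne.symm d_b_B), if_pos rfl]; omega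

/-! ### Induction lemmas over words -/

lemma prod_cons_apply (g : F) (w : List F) (t : ℚ) :
    ρ ((g :: w).prod) t = ρ g (ρ w.prod t) := by
  rw [List.prod_cons, map_mul, Equiv.Perm.mul_apply]

/-- Upper displacement bound for words with no `x0⁻¹`. -/
lemma lemU : ∀ (w : List F), (∀ g ∈ w, g ∈ gens) → cnt ((x 0)⁻¹) w = 0 →
    ∀ t : ℚ, ρ w.prod t ≤ t + cnt ((x 1)⁻¹) w - cnt (x 0) w := by
  intro w
  induction w with
  | nil => intro _ _ t; simp [cnt_nil]
  | cons g w ih =>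
    intro hmem hA t
    have hg := mem_gens (hmem g (by simp))
    have hw : ∀ g ∈ w, g ∈ gens := fun g hgw => hmem g (by simp [hgw])
    have hA' : cnt ((x 0)⁻¹) w = 0 := by
      rcases hg with rfl | rfl | rfl | rfl <;>
        rw [cnt_cons] at hA <;> omega
    have hv := ih hw hA' t
    rw [prod_cons_apply]
    set v := ρ w.prod t with hvdef
    rcases hg with rfl | rfl | rfl | rfl
    · rw [ρx0, cnt_cons, cnt_cons, if_pos rfl, if_neg d_a_B]
      push_cast; linarith
    · exfalso; rw [cnt_cons, if_pos rfl] at hA; omega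
    · rw [ρx1, cnt_cons, cnt_cons, if_neg (Ne.symm d_a_b), if_neg d_b_B]
      have := pfun0_le v; push_cast; linarith
    · rw [ρx1inv, cnt_cons, cnt_cons, if_neg (Ne.symm d_a_B), if_pos rfl]
      have := qfun0_le v; push_cast; linarith

/-- Trap lemma: with no `x0⁻¹`, nonpositive values stay nonpositive. -/
lemma lemT : ∀ (w : List F), (∀ g ∈ w, g ∈ gens) → cnt ((x 0)⁻¹) w = 0 →
    ∀ t : ℚ, t ≤ 0 → ρ w.prod t ≤ 0 := by
  intro w
  induction w with
  | nil => intro _ _ t ht; simpa using ht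
  | cons g w ih =>
    intro hmem hA t ht
    have hg := mem_gens (hmem g (by simp))
    have hw : ∀ g ∈ w, g ∈ gens := fun g hgw => hmem g (by simp [hgw])
    have hA' : cnt ((x 0)⁻¹) w = 0 := by
      rcases hg with rfl | rfl | rfl | rfl <;> rw [cnt_cons] at hA <;> omega
    have hv := ih hw hA' t ht
    rw [prod_cons_apply]
    set v := ρ w.prod t with hvdef
    rcases hg with rfl | rfl | rfl | rfl
    · rw [ρx0]; linarith
    · exfalso; rw [cnt_cons, if_pos rfl] at hA; omega
    · rw [ρx1]; have := pfun0_le v; linarith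
    · rw [ρx1inv]; rw [qfun0_id hv]; exact hv

/-- Forcing lemma: a word with no `x0⁻¹` and at least one `x1` that attains the maximal
displacement must end at a nonpositive value. -/
lemma lemFC : ∀ (w : List F), (∀ g ∈ w, g ∈ gens) → cnt ((x 0)⁻¹) w = 0 →
    1 ≤ cnt (x 1) w →
    ∀ t : ℚ, ρ w.prod t = t + cnt ((x 1)⁻¹) w - cnt (x 0) w → ρ w.prod t ≤ 0 := by
  intro w
  induction w with
  | nil => intro _ _ hb; simp [cnt_nil] at hb
  | cons g w ih =>
    intro hmem hA hb t heq
    have hg := mem_gens (hmem g (by simp))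
    have hw : ∀ g ∈ w, g ∈ gens := fun g hgw => hmem g (by simp [hgw])
    have hA' : cnt ((x 0)⁻¹) w = 0 := by
      rcases hg with rfl | rfl | rfl | rfl <;> rw [cnt_cons] at hA <;> omega
    have hU := lemU w hw hA' t
    rw [prod_cons_apply] at heq ⊢
    set v := ρ w.prod t with hvdef
    rcases hg with rfl | rfl | rfl | rfl
    · -- letter x0 : value v - 1
      rw [ρx0] at heq ⊢
      rw [cnt_cons, cnt_cons, if_pos rfl, if_neg d_a_B] at heq
      have hb' : 1 ≤ cnt (x 1) w := by rw [cnt_cons, if_neg d_a_b] at hb; omega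
      have hveq : v = t + cnt ((x 1)⁻¹) w - cnt (x 0) w := by push_cast at heq ⊢; linarith
      have := ih hw hA' hb' t hveq
      linarith
    · exfalso; rw [cnt_cons, if_pos rfl] at hA; omega
    · -- letter x1 : forcing gives pfun 0 v = v hence v ≤ 0
      rw [ρx1] at heq ⊢
      rw [cnt_cons, cnt_cons, if_neg (Ne.symm d_a_b), if_neg d_b_B] at heq
      have h1 : pfun 0 v ≤ v := pfun0_le v
      have h2 : pfun 0 v = v := by push_cast at heq; push_cast at hU; linarith
      have h3 : v ≤ 0 := pfun0_fix h2
      rw [h2]; exact h3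
    · -- letter x1⁻¹ : forcing gives qfun 0 v = v + 1 hence v ≥ 1, contradiction with IH
      rw [ρx1inv] at heq ⊢
      rw [cnt_cons, cnt_cons, if_neg (Ne.symm d_a_B), if_pos rfl] at heq
      have hb' : 1 ≤ cnt (x 1) w := by rw [cnt_cons, if_neg (Ne.symm d_b_B)] at hb; omega
      have h1 : qfun 0 v ≤ v + 1 := qfun0_le v
      have h2 : qfun 0 v = v + 1 := by push_cast at heq; push_cast at hU; linarith
      have h3 : (1:ℚ) ≤ v := qfun0_max h2
      have hveq : v = t + cnt ((x 1)⁻¹) w - cnt (x 0) w := by push_cast at heq ⊢; linarith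
      have := ih hw hA' hb' t hveq
      linarith

/-- Chord bound: each letter expands differences by a factor of at most 2,
and only `x1⁻¹` can expand at all. -/
lemma lemCH : ∀ (w : List F), (∀ g ∈ w, g ∈ gens) → ∀ t s : ℚ, t ≤ s →
    ρ w.prod s - ρ w.prod t ≤ 2 ^ (cnt ((x 1)⁻¹) w) * (s - t) ∧
      ρ w.prod t ≤ ρ w.prod s := by
  intro w
  induction w with
  | nil => intro _ t s h; simp [cnt_nil]; linarith
  | cons g w ih =>
    intro hmem t s hts
    have hg := mem_gens (hmem g (by simp))
    have hw : ∀ g ∈ w, g ∈ gens := fun g hgw => hmem g (by simp [hgw])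
    obtain ⟨hch, hmono⟩ := ih hw t s hts
    rw [prod_cons_apply, prod_cons_apply]
    set vt := ρ w.prod t with hvt
    set vs := ρ w.prod s with hvs
    have hpow : (0:ℚ) < 2 ^ (cnt ((x 1)⁻¹) w) := by positivity
    rcases hg with rfl | rfl | rfl | rfl
    · rw [ρx0, ρx0, cnt_cons, if_neg d_a_B, add_zero]
      constructor <;> [skip; linarith]
      calc vs - 1 - (vt - 1) = vs - vt := by ring
        _ ≤ _ := hch
    · rw [ρx0inv, ρx0inv, cnt_cons, if_neg d_A_B, add_zero]
      constructor <;> [skip; linarith]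
      calc vs + 1 - (vt + 1) = vs - vt := by ring
        _ ≤ _ := hch
    · rw [ρx1, ρx1, cnt_cons, if_neg d_b_B, add_zero]
      obtain ⟨hc1, hc2⟩ := pfun0_chord hmono
      constructor <;> linarith
    · rw [ρx1inv, ρx1inv, cnt_cons, if_pos rfl, pow_succ]
      obtain ⟨hc1, hc2⟩ := qfun0_chord hmono
      constructor
      · calc qfun 0 vs - qfun 0 vt ≤ 2 * (vs - vt) := hc1
          _ ≤ 2 * (2 ^ (cnt ((x 1)⁻¹) w) * (s - t)) := by linarith
          _ = 2 ^ (cnt ((x 1)⁻¹) w) * 2 * (s - t) := by ring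
      · linarith

/-! ### Exponent-sum homomorphisms -/

def wt0 : ℕ → Multiplicative ℤ := fun i => Multiplicative.ofAdd (if i = 0 then 1 else 0)
def wt1 : ℕ → Multiplicative ℤ := fun i => Multiplicative.ofAdd (if i = 0 then 0 else 1)

lemma wt0_rels : ∀ rr ∈ rels, FreeGroup.lift wt0 rr = 1 := by
  rintro rr ⟨i, j, hij, rfl⟩
  have hj : j ≠ 0 := by omega
  have hj1 : j + 1 ≠ 0 := by omega
  simp only [map_mul, map_inv, FreeGroup.lift_apply_of, wt0, if_neg hj, if_neg hj1,
    ← ofAdd_neg, ← ofAdd_add, ofAdd_eq_one]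
  ring

lemma wt1_rels : ∀ rr ∈ rels, FreeGroup.lift wt1 rr = 1 := by
  rintro rr ⟨i, j, hij, rfl⟩
  have hj : j ≠ 0 := by omega
  have hj1 : j + 1 ≠ 0 := by omega
  simp only [map_mul, map_inv, FreeGroup.lift_apply_of, wt1, if_neg hj, if_neg hj1,
    ← ofAdd_neg, ← ofAdd_add, ofAdd_eq_one]
  ring

noncomputable def χ0 : F →* Multiplicative ℤ := PresentedGroup.toGroup wt0_rels
noncomputable def χ1 : F →* Multiplicative ℤ := PresentedGroup.toGroup wt1_rels

lemma χ0_x (i : ℕ) : χ0 (x i) = Multiplicative.ofAdd (if i = 0 then 1 else 0) :=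
  PresentedGroup.toGroup.of wt0_rels
lemma χ1_x (i : ℕ) : χ1 (x i) = Multiplicative.ofAdd (if i = 0 then 0 else 1) :=
  PresentedGroup.toGroup.of wt1_rels

lemma χ0_list : ∀ (w : List F), (∀ g ∈ w, g ∈ gens) →
    Multiplicative.toAdd (χ0 w.prod) = (cnt (x 0) w : ℤ) - cnt ((x 0)⁻¹) w := by
  intro w
  induction w with
  | nil => simp [cnt_nil]
  | cons g w ih =>
    intro hmem
    have hg := mem_gens (hmem g (by simp))
    have hw := ih (fun g hgw => hmem g (by simp [hgw]))
    rw [List.prod_cons, map_mul, toAdd_mul]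
    rcases hg with rfl | rfl | rfl | rfl
    · rw [cnt_cons, cnt_cons, if_pos rfl, if_neg d_a_A, χ0_x]
      simp only [if_pos rfl, toAdd_ofAdd]; push_cast; omega
    · rw [cnt_cons, cnt_cons, if_neg (Ne.symm d_a_A), if_pos rfl, map_inv, χ0_x]
      simp only [if_pos rfl, toAdd_inv, toAdd_ofAdd]; push_cast; omega
    · rw [cnt_cons, cnt_cons, if_neg (Ne.symm d_a_b), if_neg d_A_b.symm, χ0_x]
      norm_num; omega
    · rw [cnt_cons, cnt_cons, if_neg (Ne.symm d_a_B), if_neg d_A_B.symm, map_inv, χ0_x]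
      norm_num; omega

lemma χ1_list : ∀ (w : List F), (∀ g ∈ w, g ∈ gens) →
    Multiplicative.toAdd (χ1 w.prod) = (cnt (x 1) w : ℤ) - cnt ((x 1)⁻¹) w := by
  intro w
  induction w with
  | nil => simp [cnt_nil]
  | cons g w ih =>
    intro hmem
    have hg := mem_gens (hmem g (by simp))
    have hw := ih (fun g hgw => hmem g (by simp [hgw]))
    rw [List.prod_cons, map_mul, toAdd_mul]
    rcases hg with rfl | rfl | rfl | rfl
    · rw [cnt_cons, cnt_cons, if_neg d_a_b, if_neg d_a_B, χ1_x]
      norm_num; omega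
    · rw [cnt_cons, cnt_cons, if_neg d_A_b, if_neg d_A_B, map_inv, χ1_x]
      norm_num; omega
    · rw [cnt_cons, cnt_cons, if_pos rfl, if_neg d_b_B, χ1_x]
      simp only [if_neg (Nat.one_ne_zero), toAdd_ofAdd]; push_cast; omega
    · rw [cnt_cons, cnt_cons, if_neg (Ne.symm d_b_B), if_pos rfl, map_inv, χ1_x]
      simp only [if_neg (Nat.one_ne_zero), toAdd_inv, toAdd_ofAdd]; push_cast; omega

lemma χ0_l (n : ℕ) : Multiplicative.toAdd (χ0 (l n)) = (n : ℤ) - 1 := by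
  simp only [l, map_mul, map_zpow, χ0_x, if_pos rfl, if_neg (Nat.one_ne_zero)]
  simp [toAdd_mul, toAdd_zpow]
  ring

lemma χ1_l (n : ℕ) : Multiplicative.toAdd (χ1 (l n)) = 1 - (n : ℤ) := by
  simp only [l, map_mul, map_zpow, χ1_x, if_pos rfl, if_neg (Nat.one_ne_zero)]
  simp [toAdd_mul, toAdd_zpow]
  ring

lemma χ0_r (n : ℕ) : Multiplicative.toAdd (χ0 (r n)) = (n : ℤ) + 1 := by
  simp only [r, map_mul, map_pow, χ0_x, if_pos rfl]
  simp [toAdd_mul, toAdd_pow, χ0_l]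
  ring

lemma χ1_r (n : ℕ) : Multiplicative.toAdd (χ1 (r n)) = 1 - (n : ℤ) := by
  simp only [r, map_mul, map_pow, χ1_x, if_pos rfl]
  simp [toAdd_mul, toAdd_pow, χ1_l]

/-! ### Evaluating `l n` and `r n` in the model -/

lemma X1inv_apply (t : ℚ) : ((X 1)⁻¹ : Equiv.Perm ℚ) t = qfun 0 t := by rw [X1_eq]; rfl
lemma X1_apply (t : ℚ) : (X 1) t = pfun 0 t := by rw [X1_eq]; rfl
lemma X0_apply (t : ℚ) : (X 0) t = t - 1 := by simp [X]; rfl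
lemma X0inv_apply (t : ℚ) : ((X 0)⁻¹ : Equiv.Perm ℚ) t = t + 1 := by simp [X]; rfl

lemma X0_pow_apply (k : ℕ) (t : ℚ) : ((X 0) ^ k) t = t - k := by
  induction k with
  | zero => simp
  | succ k ih =>
    rw [pow_succ', Equiv.Perm.mul_apply, ih, X0_apply]
    push_cast; ring

lemma X0inv_pow_apply (k : ℕ) (t : ℚ) : (((X 0)⁻¹) ^ k) t = t + k := by
  induction k with
  | zero => simp
  | succ k ih =>
    rw [pow_succ', Equiv.Perm.mul_apply, ih, X0inv_apply]
    push_cast; ring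

lemma X0_zpow_apply (m : ℤ) (t : ℚ) : ((X 0) ^ m) t = t - m := by
  cases m with
  | ofNat k => rw [Int.ofNat_eq_coe, zpow_natCast, X0_pow_apply]; norm_num
  | negSucc k =>
    rw [zpow_negSucc, ← inv_pow, X0inv_pow_apply]
    push_cast; ring

lemma B_pow_id {t : ℚ} (h : t ≤ 0) (k : ℕ) : (((X 1)⁻¹) ^ k) t = t := by
  induction k with
  | zero => simp
  | succ k ih =>
    rw [pow_succ, Equiv.Perm.mul_apply, X1inv_apply, qfun0_id h, ih]

lemma B_pow_small (k : ℕ) : (((X 1)⁻¹) ^ k) (1/2^k : ℚ) = 1 := by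
  induction k with
  | zero => norm_num
  | succ k ih =>
    rw [pow_succ, Equiv.Perm.mul_apply, X1inv_apply]
    have h1 : (0:ℚ) < 1/2^(k+1) := by positivity
    have h2 : (1:ℚ)/2^(k+1) ≤ 1 := by
      rw [div_le_one (by positivity)]
      exact one_le_pow₀ (by norm_num)
    have : qfun 0 (1/2^(k+1) : ℚ) = 1/2^k := by
      unfold qfun
      rw [if_neg (by linarith), if_pos (by linarith)]
      rw [pow_succ]; field_simp; ring
    rw [this, ih]

lemma B_pow_one (k : ℕ) : (((X 1)⁻¹) ^ k) 1 = k + 1 := by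
  induction k with
  | zero => norm_num
  | succ k ih =>
    rw [pow_succ', Equiv.Perm.mul_apply, ih, X1inv_apply]
    have hk : (0:ℚ) ≤ k := Nat.cast_nonneg k
    unfold qfun
    split_ifs with h1 h2
    · exfalso; linarith
    · push_cast; push_cast at h2; linarith
    · push_cast; ring

lemma X1_zpow_neg (n : ℕ) : (X 1 ^ (-(n:ℤ))) = ((X 1)⁻¹) ^ n := by
  rw [zpow_neg, zpow_natCast, inv_pow]

lemma ρl_apply (n : ℕ) (t : ℚ) :
    ρ (l n) t = (X 0 ^ (-2:ℤ)) ((X 1) ((X 0 ^ ((n:ℤ)+1)) ((((X 1)⁻¹) ^ n) t))) := by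
  simp only [l, map_mul, map_zpow, ρ_x, Equiv.Perm.mul_apply, X1_zpow_neg]

lemma ρl_0 (n : ℕ) : ρ (l n) 0 = 1 - (n:ℚ) := by
  have hn : (0:ℚ) ≤ n := Nat.cast_nonneg n
  have h1 : (((X 1)⁻¹) ^ n) (0:ℚ) = 0 := B_pow_id le_rfl n
  have h2 : (X 0 ^ ((n:ℤ)+1)) (0:ℚ) = -(n:ℚ) - 1 := by rw [X0_zpow_apply]; push_cast; ring
  have h3 : X 1 (-(n:ℚ) - 1) = -(n:ℚ) - 1 := by
    rw [X1_apply]; exact pfun0_id (by linarith)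
  have h4 : (X 0 ^ (-2:ℤ)) (-(n:ℚ) - 1) = 1 - (n:ℚ) := by
    rw [X0_zpow_apply]; push_cast; ring
  rw [ρl_apply, h1, h2, h3, h4]

lemma ρl_small (n : ℕ) : ρ (l n) (1/2^n) = 2 - (n:ℚ) := by
  have hn : (0:ℚ) ≤ n := Nat.cast_nonneg n
  have h1 : (((X 1)⁻¹) ^ n) (1/2^n : ℚ) = 1 := B_pow_small n
  have h2 : (X 0 ^ ((n:ℤ)+1)) (1:ℚ) = -(n:ℚ) := by rw [X0_zpow_apply]; push_cast; ring
  have h3 : X 1 (-(n:ℚ)) = -(n:ℚ) := by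
    rw [X1_apply]; exact pfun0_id (by linarith)
  have h4 : (X 0 ^ (-2:ℤ)) (-(n:ℚ)) = 2 - (n:ℚ) := by
    rw [X0_zpow_apply]; push_cast; ring
  rw [ρl_apply, h1, h2, h3, h4]

lemma ρl_1 (n : ℕ) : ρ (l n) 1 = 2 := by
  have h1 : (((X 1)⁻¹) ^ n) (1:ℚ) = (n:ℚ) + 1 := B_pow_one n
  have h2 : (X 0 ^ ((n:ℤ)+1)) ((n:ℚ) + 1) = 0 := by rw [X0_zpow_apply]; push_cast; ring
  have h3 : X 1 (0:ℚ) = 0 := by rw [X1_apply]; exact pfun0_id le_rfl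
  have h4 : (X 0 ^ (-2:ℤ)) (0:ℚ) = 2 := by rw [X0_zpow_apply]; push_cast; ring
  rw [ρl_apply, h1, h2, h3, h4]

lemma ρr_apply (n : ℕ) (t : ℚ) : ρ (r n) t = ρ (l n) t - 2 := by
  have : ρ (r n) t = (X 0 ^ (2:ℕ)) (ρ (l n) t) := by
    simp only [r, map_mul, map_pow, ρ_x, Equiv.Perm.mul_apply]
  rw [this, X0_pow_apply]
  norm_num

lemma ρr_0 (n : ℕ) : ρ (r n) 0 = -1 - (n:ℚ) := by rw [ρr_apply, ρl_0]; ring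
lemma ρr_small (n : ℕ) : ρ (r n) (1/2^n) = -(n:ℚ) := by rw [ρr_apply, ρl_small]; ring

/-! ### Relations in F and geodesic words -/

lemma x_rel {i j : ℕ} (h : i < j) : (x i)⁻¹ * x j * x i = x (j+1) := by
  have h1 : (PresentedGroup.mk rels
      ((FreeGroup.of i)⁻¹ * FreeGroup.of j * FreeGroup.of i * (FreeGroup.of (j+1))⁻¹) : F) = 1 := by
    show (QuotientGroup.mk _ : F) = 1
    rw [QuotientGroup.eq_one_iff]
    exact Subgroup.subset_normalClosure ⟨i, j, h, rfl⟩
  rw [map_mul, map_mul, map_mul, map_inv, map_inv] at h1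
  have h2 : ((x i)⁻¹ * x j * x i) * (x (j+1))⁻¹ = 1 := h1
  exact mul_inv_eq_one.mp h2

lemma x_mul_x0 {j : ℕ} (hj : 1 ≤ j) : x j * x 0 = x 0 * x (j+1) := by
  have h := x_rel (show 0 < j from hj)
  rw [← h]; group

lemma xj_x0_pow {j : ℕ} (hj : 1 ≤ j) : ∀ k, x j * (x 0)^k = (x 0)^k * x (j+k) := by
  intro k
  induction k with
  | zero => simp
  | succ k ih =>
    have h1 : x j * (x 0)^(k+1) = (x j * (x 0)^k) * x 0 := by rw [pow_succ, mul_assoc]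
    rw [h1, ih, mul_assoc, x_mul_x0 (by omega), ← mul_assoc, ← pow_succ,
      show j + k + 1 = j + (k+1) by omega]

lemma x1inv_x : ∀ k, ((x 1)⁻¹)^k * x 2 = x (k+2) * ((x 1)⁻¹)^k := by
  intro k
  induction k with
  | zero => simp
  | succ k ih =>
    have h := x_rel (show 1 < k + 2 by omega)
    have h' : (x 1)⁻¹ * x (k+2) = x (k+3) * (x 1)⁻¹ := by rw [← h]; group
    calc ((x 1)⁻¹)^(k+1) * x 2 = (x 1)⁻¹ * (((x 1)⁻¹)^k * x 2) := by
          rw [pow_succ']; group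
      _ = (x 1)⁻¹ * (x (k+2) * ((x 1)⁻¹)^k) := by rw [ih]
      _ = ((x 1)⁻¹ * x (k+2)) * ((x 1)⁻¹)^k := by group
      _ = (x (k+3) * (x 1)⁻¹) * ((x 1)⁻¹)^k := by rw [h']
      _ = x (k+1+2) * ((x 1)⁻¹)^(k+1) := by rw [show k+3 = k+1+2 by omega, pow_succ']; group

lemma l_eq (n : ℕ) (hn : 1 ≤ n) :
    l n = (x 0)^(n-1) * ((x 1)⁻¹)^n * (x 0)⁻¹ * x 1 * x 0 := by
  obtain ⟨m, rfl⟩ : ∃ m, n = m + 1 := ⟨n-1, by omega⟩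
  have h2 : (x 0)⁻¹ * x 1 * x 0 = x 2 := x_rel (by norm_num)
  have h3 : (x 0)⁻¹ * x 2 * x 0 = x 3 := x_rel (by norm_num)
  have h4 : x 3 * (x 0)^m = (x 0)^m * x (3+m) := xj_x0_pow (by norm_num) m
  have h5 : ((x 1)⁻¹)^(m+1) * x 2 = x (m+3) * ((x 1)⁻¹)^(m+1) := x1inv_x (m+1)
  have e0 : l (m+1) = x 0 ^ (-2:ℤ) * x 1 * x 0 ^ (((m+1:ℕ):ℤ) + 1) * x 1 ^ (-((m+1:ℕ):ℤ)) := rfl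
  have ec : x 0 ^ (((m+1:ℕ):ℤ) + 1) = x 0 ^ (2:ℤ) * (x 0)^m := by
    rw [show (((m+1:ℕ):ℤ) + 1) = 2 + (m:ℤ) by push_cast; ring, zpow_add, zpow_natCast]
  have ex1 : x 1 ^ (-((m+1:ℕ):ℤ)) = ((x 1)⁻¹)^(m+1) := by
    rw [zpow_neg, zpow_natCast, inv_pow]
  have e1 : l (m+1) = (x 0 ^ (-2:ℤ) * x 1 * x 0 ^ (2:ℤ)) * ((x 0)^m * ((x 1)⁻¹)^(m+1)) := by
    rw [e0, ec, ex1]; group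
  have e2 : x 0 ^ (-2:ℤ) * x 1 * x 0 ^ (2:ℤ) = x 3 := by
    rw [← h3, ← h2, show (2:ℤ) = 1 + 1 by norm_num, zpow_add, zpow_one]
    group
  have e3 : l (m+1) = (x 0)^m * (x (3+m) * ((x 1)⁻¹)^(m+1)) := by
    rw [e1, e2, ← mul_assoc, h4, mul_assoc]
  rw [e3]
  have e4 : (x 0)^(m+1-1) * ((x 1)⁻¹)^(m+1) * (x 0)⁻¹ * x 1 * x 0
      = (x 0)^m * (((x 1)⁻¹)^(m+1) * ((x 0)⁻¹ * x 1 * x 0)) := by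
    simp only [Nat.add_sub_cancel]; group
  rw [e4, h2, h5, show m+3 = 3+m by omega]

lemma r_eq (n : ℕ) : r n = x 1 * (x 0)^(n+1) * ((x 1)⁻¹)^n := by
  have ec : x 0 ^ ((n:ℤ)+1) = (x 0)^(n+1) := by
    rw [show ((n:ℤ)+1) = ((n+1:ℕ):ℤ) by push_cast; ring, zpow_natCast]
  have ex1 : x 1 ^ (-(n:ℤ)) = ((x 1)⁻¹)^n := by rw [zpow_neg, zpow_natCast, inv_pow]
  show x 0 ^ 2 * l n = _
  rw [show l n = x 0 ^ (-2:ℤ) * x 1 * x 0 ^ ((n:ℤ)+1) * x 1 ^ (-(n:ℤ)) from rfl, ec, ex1]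
  group

def wlist (n : ℕ) : List F :=
  List.replicate (n-1) (x 0) ++ List.replicate n ((x 1)⁻¹) ++ [(x 0)⁻¹, x 1, x 0]

def wrlist (n : ℕ) : List F :=
  x 1 :: (List.replicate (n+1) (x 0) ++ List.replicate n ((x 1)⁻¹))

lemma wlist_length (n : ℕ) (hn : 1 ≤ n) : (wlist n).length = 2*n+2 := by
  simp [wlist]; omega

lemma wrlist_length (n : ℕ) : (wrlist n).length = 2*n+2 := by
  simp [wrlist]; omega

lemma wlist_mem (n : ℕ) : ∀ g ∈ wlist n, g ∈ gens := by
  intro g hg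
  simp only [wlist, List.mem_append, List.mem_replicate, List.mem_cons, List.mem_singleton,
    List.not_mem_nil, or_false] at hg
  rcases hg with (⟨_, rfl⟩ | ⟨_, rfl⟩) | (rfl | rfl | rfl) <;> simp [gens]

lemma wrlist_mem (n : ℕ) : ∀ g ∈ wrlist n, g ∈ gens := by
  intro g hg
  simp only [wrlist, List.mem_cons, List.mem_append, List.mem_replicate] at hg
  rcases hg with rfl | (⟨_, rfl⟩ | ⟨_, rfl⟩) <;> simp [gens]

lemma wlist_prod (n : ℕ) (hn : 1 ≤ n) : (wlist n).prod = l n := by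
  rw [l_eq n hn]
  simp only [wlist, List.prod_append, List.prod_replicate, List.prod_cons, List.prod_nil]
  group

lemma wrlist_prod (n : ℕ) : (wrlist n).prod = r n := by
  rw [r_eq n]
  simp only [wrlist, List.prod_append, List.prod_replicate, List.prod_cons, List.prod_nil]
  group

/-! ### Lower bounds -/

lemma cB_ge (n : ℕ) (w : List F) (hw : ∀ g ∈ w, g ∈ gens) (f0 fs : ℚ)
    (h0 : ρ w.prod 0 = f0) (hs : ρ w.prod (1/2^n) = fs) (hdiff : fs - f0 = 1) :
    n ≤ cnt ((x 1)⁻¹) w := by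
  have hch := (lemCH w hw 0 (1/2^n) (by positivity)).1
  rw [h0, hs] at hch
  have hpos : (0:ℚ) < 2^n := by positivity
  have hdiv : (1:ℚ) ≤ 2^(cnt ((x 1)⁻¹) w) / 2^n := by
    rw [div_eq_mul_one_div]
    have : (1:ℚ)/2^n - 0 = 1/2^n := by ring
    rw [this] at hch
    linarith
  have hle : (2:ℚ)^n ≤ 2^(cnt ((x 1)⁻¹) w) := (one_le_div hpos).mp hdiv
  by_contra hc
  push_neg at hc
  have : (2:ℚ)^(cnt ((x 1)⁻¹) w) < 2^n := by
    apply pow_lt_pow_right₀ (by norm_num) hc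
  linarith

lemma lower_l (n : ℕ) (hn : 1 ≤ n) (w : List F) (hw : ∀ g ∈ w, g ∈ gens)
    (hp : w.prod = l n) : 2*n+2 ≤ w.length := by
  have hlen := length_eq_cnt w hw
  have h0 : (cnt (x 0) w : ℤ) - cnt ((x 0)⁻¹) w = (n:ℤ) - 1 := by
    have := χ0_list w hw; rw [hp, χ0_l] at this; omega
  have h1 : (cnt (x 1) w : ℤ) - cnt ((x 1)⁻¹) w = 1 - (n:ℤ) := by
    have := χ1_list w hw; rw [hp, χ1_l] at this; omega
  have hB : n ≤ cnt ((x 1)⁻¹) w := by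
    apply cB_ge n w hw (1 - (n:ℚ)) (2 - (n:ℚ))
    · rw [hp]; exact ρl_0 n
    · rw [hp]; exact ρl_small n
    · ring
  by_contra hcon
  push_neg at hcon
  have hA0 : cnt ((x 0)⁻¹) w = 0 := by omega
  have hb1 : cnt (x 1) w = 1 := by omega
  have hcB : cnt ((x 1)⁻¹) w = n := by omega
  have hca : cnt (x 0) w = n - 1 := by omega
  have heq : ρ w.prod 1 = 1 + (cnt ((x 1)⁻¹) w : ℚ) - cnt (x 0) w := by
    rw [hp, ρl_1, hcB, hca]
    have : ((n - 1 : ℕ) : ℚ) = (n:ℚ) - 1 := by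
      rw [Nat.cast_sub hn]; norm_num
    rw [this]
    ring
  have := lemFC w hw hA0 (by omega) 1 heq
  rw [hp, ρl_1] at this
  norm_num at this

lemma lower_r (n : ℕ) (hn : 1 ≤ n) (w : List F) (hw : ∀ g ∈ w, g ∈ gens)
    (hp : w.prod = r n) : 2*n+2 ≤ w.length := by
  have hlen := length_eq_cnt w hw
  have h0 : (cnt (x 0) w : ℤ) - cnt ((x 0)⁻¹) w = (n:ℤ) + 1 := by
    have := χ0_list w hw; rw [hp, χ0_r] at this; omega
  have h1 : (cnt (x 1) w : ℤ) - cnt ((x 1)⁻¹) w = 1 - (n:ℤ) := by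
    have := χ1_list w hw; rw [hp, χ1_r] at this; omega
  have hB : n ≤ cnt ((x 1)⁻¹) w := by
    apply cB_ge n w hw (-1 - (n:ℚ)) (-(n:ℚ))
    · rw [hp]; exact ρr_0 n
    · rw [hp]; exact ρr_small n
    · ring
  omega

/-- For `n ≥ 1`, both `l` and `r` have length exactly `2n + 2`. -/
theorem length_l_and_r :
    ∀ n : ℕ, 1 ≤ n → len (l n) = 2 * n + 2 ∧ len (r n) = 2 * n + 2 := by
  intro n hn
  constructor
  · have hmem : 2*n+2 ∈ {m | ∃ w : List F, w.length = m ∧ (∀ a ∈ w, a ∈ gens) ∧ w.prod = l n} :=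
      ⟨wlist n, wlist_length n hn, wlist_mem n, wlist_prod n hn⟩
    apply le_antisymm
    · exact Nat.sInf_le hmem
    · obtain ⟨w, hwl, hwm, hwp⟩ := Nat.sInf_mem ⟨2*n+2, hmem⟩
      rw [len, ← hwl]
      exact lower_l n hn w hwm hwp
  · have hmem : 2*n+2 ∈ {m | ∃ w : List F, w.length = m ∧ (∀ a ∈ w, a ∈ gens) ∧ w.prod = r n} :=
      ⟨wrlist n, wrlist_length n, wrlist_mem n, wrlist_prod n⟩
    apply le_antisymm
    · exact Nat.sInf_le hmem
    · obtain ⟨w, hwl, hwm, hwp⟩ := Nat.sInf_mem ⟨2*n+2, hmem⟩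
      rw [len, ← hwl]
      exact lower_r n hn w hwm hwp



end ThompsonF
end

section
/- For every integer n ≥ 1, with l := x_0^{-2} x_1 x_0^{n+1} x_1^{-n} in Thompson's group F, the element x_0 l has word length exactly 2n + 3 with respect to {x_0, x_1}; consequently the two-step path l → x_0 l → x_0^2 l leaves the ball B_{2n+2}. -/
/-
`F` acts on binary streams (points of Cantor space): `x₀` by `0t ↦ 00t`, `10t ↦ 01t`,
`11t ↦ 1t`, and `x_j` as `x₀` behind a prefix of `j` ones. Away from the two constant streams,
the potential `ψ` with `ψ(1^{k+1}0…) = k` and `ψ(0^k1…) = -k` satisfies `ψ(x₀ s) = ψ s - 1`,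
`ψ(x₀⁻¹ s) = ψ s + 1`, `ψ(x₁ s) ≤ ψ s` and `ψ(x₁⁻¹ s) ≤ ψ s + 1`. Since `x₀ l` fixes `110…`,
the weights `-1, 1, 0, 1` of `x₀, x₀⁻¹, x₁, x₁⁻¹`, summed over any word for `x₀ l`, are at least
`0`. With the exponent sums `n` and `1 - n` this bounds the length below by `2n + 1`, and a word of length at
most `2n + 2` has no `x₀⁻¹`, some `x₁`, and attains every bound. That is impossible: such an
`x₁`-step lands in the trap of streams beginning with `0` or `100`, which `x₀` preserves and from
which no such `x₁⁻¹`-step starts, while `110…` lies outside it. The word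
`x₀⁻¹ x₁ x₀^{n+1} x₁^{-n}` has length `2n + 3`.
-/

namespace Stream'

variable {α : Type*}

lemma exists_eq_cons (s : Stream' α) : ∃ (b : α) (t : Stream' α), s = b :: t :=
  ⟨s.head, s.tail, (Stream'.eta s).symm⟩

lemma exists_eq_cons_cons (s : Stream' α) :
    ∃ (b₀ b₁ : α) (t : Stream' α), s = b₀ :: b₁ :: t :=
  ⟨_, _, _, by rw [Stream'.eta, Stream'.eta]⟩

lemma exists_eq_cons_cons_cons (s : Stream' α) :
    ∃ (b₀ b₁ b₂ : α) (t : Stream' α), s = b₀ :: b₁ :: b₂ :: t :=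
  ⟨_, _, _, _, by rw [Stream'.eta, Stream'.eta, Stream'.eta]⟩

lemma cons_eq_const_iff {b c : α} {t : Stream' α} : b :: t = const c ↔ b = c ∧ t = const c := by
  conv_lhs => rw [const_eq c]
  exact cons_injective2.eq_iff

lemma replicate_succ_append_stream (n : ℕ) (a : α) (s : Stream' α) :
    List.replicate (n + 1) a ++ₛ s = List.replicate n a ++ₛ a :: s := by
  rw [List.replicate_succ', append_append_stream]
  rfl

end Stream'

namespace ThompsonF

open Stream'

def x0Perm : Equiv.Perm (Stream' Bool) where
  toFun s :=
    match s.head, s.tail.head with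
    | false, _ => false :: s
    | true, false => false :: true :: s.tail.tail
    | true, true => s.tail
  invFun s :=
    match s.head, s.tail.head with
    | true, _ => true :: s
    | false, true => true :: false :: s.tail.tail
    | false, false => s.tail
  left_inv s := by
    obtain ⟨b₀, b₁, t, rfl⟩ := exists_eq_cons_cons s
    cases b₀ <;> cases b₁ <;> rfl
  right_inv s := by
    obtain ⟨b₀, b₁, t, rfl⟩ := exists_eq_cons_cons s
    cases b₀ <;> cases b₁ <;> rfl

section x0Perm

variable (t : Stream' Bool)

@[simp] lemma x0Perm_false : x0Perm (false :: t) = false :: false :: t := rfl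
@[simp] lemma x0Perm_true_false : x0Perm (true :: false :: t) = false :: true :: t := rfl
@[simp] lemma x0Perm_true_true : x0Perm (true :: true :: t) = true :: t := rfl
@[simp] lemma x0Perm_inv_true : x0Perm⁻¹ (true :: t) = true :: true :: t := rfl
@[simp] lemma x0Perm_inv_false_true : x0Perm⁻¹ (false :: true :: t) = true :: false :: t := rfl
@[simp] lemma x0Perm_inv_false_false : x0Perm⁻¹ (false :: false :: t) = false :: t := rfl

end x0Perm

lemma x0Perm_const_false : x0Perm (const false) = const false :=
  Stream'.ext fun n => by cases n <;> rfl

def onTrue : Monoid.End (Equiv.Perm (Stream' Bool)) where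
  toFun π :=
    { toFun s := if s.head then true :: π s.tail else s
      invFun s := if s.head then true :: π⁻¹ s.tail else s
      left_inv s := by obtain ⟨b, t, rfl⟩ := exists_eq_cons s; cases b <;> simp
      right_inv s := by obtain ⟨b, t, rfl⟩ := exists_eq_cons s; cases b <;> simp }
  map_one' := by
    ext s : 1
    obtain ⟨b, t, rfl⟩ := exists_eq_cons s
    cases b <;> rfl
  map_mul' π σ := by
    ext s : 1
    obtain ⟨b, t, rfl⟩ := exists_eq_cons s
    cases b <;> rfl

section onTrue

variable (π : Equiv.Perm (Stream' Bool)) (t : Stream' Bool)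

@[simp] lemma onTrue_true : onTrue π (true :: t) = true :: π t := rfl
@[simp] lemma onTrue_false : onTrue π (false :: t) = false :: t := rfl

@[simp] lemma onTrue_inv_true : (onTrue π)⁻¹ (true :: t) = true :: π⁻¹ t := by
  rw [← map_inv, onTrue_true]

@[simp] lemma onTrue_inv_false : (onTrue π)⁻¹ (false :: t) = false :: t := by
  rw [← map_inv, onTrue_false]

lemma onTrue_pow_succ_apply (j : ℕ) : (onTrue ^ (j + 1)) π = onTrue ((onTrue ^ j) π) := by
  rw [pow_succ', Monoid.End.coe_mul, Function.comp_apply]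

lemma onTrue_pow_apply_replicate_append (j : ℕ) :
    (onTrue ^ j) π (List.replicate j true ++ₛ t) = List.replicate j true ++ₛ π t := by
  induction j with
  | zero => rfl
  | succ j ih =>
    simp only [List.replicate_succ, cons_append_stream, onTrue_pow_succ_apply, onTrue_true, ih]

lemma onTrue_pow_apply_of_false_mem {j : ℕ} {s : Stream' Bool} (h : false ∈ s.take j) :
    (onTrue ^ j) π s = s := by
  induction j generalizing s with
  | zero => simp at h
  | succ j ih =>
    obtain ⟨_ | _, t, rfl⟩ := exists_eq_cons s
    · simp [onTrue_pow_succ_apply]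
    · simp_all [onTrue_pow_succ_apply]

end onTrue

lemma eq_replicate_append_drop_or_false_mem_take (s : Stream' Bool) (j : ℕ) :
    s = List.replicate j true ++ₛ s.drop j ∨ false ∈ s.take j := by
  refine or_iff_not_imp_right.mpr fun h => ?_
  have : s.take j = List.replicate j true :=
    List.eq_replicate_iff.mpr ⟨length_take j s, fun b hb => by cases b <;> simp_all⟩
  rw [← this, append_take_drop]

lemma x0Perm_replicate_append {m : ℕ} (hm : 1 ≤ m) (t : Stream' Bool) :
    x0Perm (List.replicate (m + 1) true ++ₛ t) = List.replicate m true ++ₛ t := by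
  obtain ⟨k, rfl⟩ := Nat.exists_eq_add_of_le' hm
  simp [List.replicate_succ, cons_append_stream]

lemma false_mem_take_x0Perm {m : ℕ} (hm : 1 ≤ m) {s : Stream' Bool}
    (h : false ∈ s.take (m + 1)) : false ∈ (x0Perm s).take m := by
  obtain ⟨k, rfl⟩ := Nat.exists_eq_add_of_le' hm
  obtain ⟨_ | _, _ | _, t, rfl⟩ := exists_eq_cons_cons s <;> simp_all

lemma onTrue_pow_x0Perm_mul_x0Perm {m : ℕ} (hm : 1 ≤ m) :
    (onTrue ^ m) x0Perm * x0Perm = x0Perm * (onTrue ^ (m + 1)) x0Perm := by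
  ext1 s
  simp only [Equiv.Perm.mul_apply]
  rcases eq_replicate_append_drop_or_false_mem_take s (m + 1) with h | h
  · rw [h, onTrue_pow_apply_replicate_append, x0Perm_replicate_append hm,
      x0Perm_replicate_append hm, onTrue_pow_apply_replicate_append]
  · rw [onTrue_pow_apply_of_false_mem _ h,
      onTrue_pow_apply_of_false_mem _ (false_mem_take_x0Perm hm h)]

def xPerm (j : ℕ) : Equiv.Perm (Stream' Bool) := (onTrue ^ j) x0Perm

@[simp] lemma xPerm_zero : xPerm 0 = x0Perm := rfl

@[simp] lemma xPerm_one : xPerm 1 = onTrue x0Perm := rfl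

lemma xPerm_conj {i j : ℕ} (hij : i < j) : (xPerm i)⁻¹ * xPerm j * xPerm i = xPerm (j + 1) := by
  obtain ⟨m, hm, rfl⟩ : ∃ m, 1 ≤ m ∧ j = i + m := ⟨j - i, by omega, by omega⟩
  have hconj : x0Perm⁻¹ * (onTrue ^ m) x0Perm * x0Perm = (onTrue ^ (m + 1)) x0Perm := by
    rw [mul_assoc, onTrue_pow_x0Perm_mul_x0Perm hm, inv_mul_cancel_left]
  simp only [xPerm, pow_add, Monoid.End.coe_mul, Function.comp_apply, ← map_inv, ← map_mul,
    hconj, add_assoc]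

def toPerm : F →* Equiv.Perm (Stream' Bool) :=
  PresentedGroup.toGroup (f := xPerm) <| by
    rintro _ ⟨i, j, hij, rfl⟩
    simp only [map_mul, map_inv, FreeGroup.lift_apply_of, xPerm_conj hij, mul_inv_cancel]

@[simp] lemma toPerm_x (j : ℕ) : toPerm (x j) = xPerm j := PresentedGroup.toGroup.of _

noncomputable def leadingRun (b : Bool) (s : Stream' Bool) : ℕ := sInf {k | s.get k ≠ b}

lemma leadingRun_cons_of_ne {b c : Bool} (h : c ≠ b) (t : Stream' Bool) :
    leadingRun b (c :: t) = 0 :=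
  Nat.sInf_eq_zero.mpr (Or.inl h)

lemma leadingRun_cons_self {b : Bool} {t : Stream' Bool} (ht : t ≠ const b) :
    leadingRun b (b :: t) = leadingRun b t + 1 := by
  obtain ⟨k, hk⟩ : ∃ k, t.get k ≠ b := by
    by_contra! h
    exact ht (Stream'.ext h)
  have hpos : 0 < leadingRun b (b :: t) := by
    refine Nat.pos_of_ne_zero fun h0 => ?_
    rcases Nat.sInf_eq_zero.mp h0 with h | h
    · exact h rfl
    · exact (Set.eq_empty_iff_forall_notMem.mp h (k + 1)) hk
  exact (Nat.sInf_add hpos).symm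

noncomputable def potential (s : Stream' Bool) : ℤ :=
  if s.head then leadingRun true s.tail else -leadingRun false s

@[simp] lemma potential_true_cons (t : Stream' Bool) :
    potential (true :: t) = leadingRun true t := rfl

@[simp] lemma potential_false_cons (t : Stream' Bool) :
    potential (false :: t) = -leadingRun false (false :: t) := rfl

def IsInterior (s : Stream' Bool) : Prop := s ≠ const false ∧ s ≠ const true

def InTrap (s : Stream' Bool) : Prop := s.head = false ∨ s.take 3 = [true, false, false]

def endpointStabilizer : Subgroup (Equiv.Perm (Stream' Bool)) :=
  MulAction.stabilizer _ (const false) ⊓ MulAction.stabilizer _ (const true)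

lemma mem_endpointStabilizer {π : Equiv.Perm (Stream' Bool)} :
    π ∈ endpointStabilizer ↔ π (const false) = const false ∧ π (const true) = const true :=
  Iff.rfl

lemma x0Perm_mem_endpointStabilizer : x0Perm ∈ endpointStabilizer :=
  ⟨x0Perm_const_false, rfl⟩

lemma onTrue_mem_endpointStabilizer {π : Equiv.Perm (Stream' Bool)}
    (hπ : π ∈ endpointStabilizer) : onTrue π ∈ endpointStabilizer := by
  refine ⟨rfl, ?_⟩
  change true :: π (const true) = const true
  rw [(mem_endpointStabilizer.mp hπ).2, ← const_eq]

lemma IsInterior.perm {π : Equiv.Perm (Stream' Bool)} (hπ : π ∈ endpointStabilizer)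
    {s : Stream' Bool} (hs : IsInterior s) : IsInterior (π s) := by
  obtain ⟨h₀, h₁⟩ := mem_endpointStabilizer.mp hπ
  exact ⟨fun h => hs.1 (π.injective (h.trans h₀.symm)),
    fun h => hs.2 (π.injective (h.trans h₁.symm))⟩

section potential

variable {s : Stream' Bool}

lemma potential_x0Perm (hs : IsInterior s) : potential (x0Perm s) = potential s - 1 := by
  obtain ⟨_ | _, _ | _, t, rfl⟩ := exists_eq_cons_cons s <;>
    simp_all [IsInterior, cons_eq_const_iff, leadingRun_cons_self, leadingRun_cons_of_ne]
  ring

lemma potential_x0Perm_inv (hs : IsInterior s) : potential (x0Perm⁻¹ s) = potential s + 1 := by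
  have := potential_x0Perm (hs.perm (inv_mem x0Perm_mem_endpointStabilizer))
  rw [← Equiv.Perm.mul_apply, mul_inv_cancel, Equiv.Perm.one_apply] at this
  omega

lemma potential_onTrue_x0Perm_le (hs : IsInterior s) :
    potential (onTrue x0Perm s) ≤ potential s := by
  obtain ⟨_ | _, _ | _, _ | _, t, rfl⟩ := exists_eq_cons_cons_cons s <;>
    simp_all [IsInterior, cons_eq_const_iff, leadingRun_cons_self, leadingRun_cons_of_ne]

lemma inTrap_onTrue_x0Perm (hs : IsInterior s) (h : potential (onTrue x0Perm s) = potential s) :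
    InTrap (onTrue x0Perm s) := by
  obtain ⟨_ | _, _ | _, _ | _, t, rfl⟩ := exists_eq_cons_cons_cons s <;>
    simp_all [InTrap, IsInterior, cons_eq_const_iff, leadingRun_cons_self, leadingRun_cons_of_ne]

lemma potential_onTrue_x0Perm_inv_le (hs : IsInterior s) :
    potential ((onTrue x0Perm)⁻¹ s) ≤ potential s + 1 := by
  obtain ⟨_ | _, _ | _, _ | _, t, rfl⟩ := exists_eq_cons_cons_cons s <;>
    simp_all [IsInterior, cons_eq_const_iff, leadingRun_cons_self, leadingRun_cons_of_ne]
  omega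

lemma potential_onTrue_x0Perm_inv_le_of_inTrap (hs : IsInterior s) (h : InTrap s) :
    potential ((onTrue x0Perm)⁻¹ s) ≤ potential s := by
  obtain ⟨_ | _, _ | _, _ | _, t, rfl⟩ := exists_eq_cons_cons_cons s <;>
    simp_all [InTrap, IsInterior, cons_eq_const_iff, leadingRun_cons_self, leadingRun_cons_of_ne]

lemma inTrap_x0Perm (hs : InTrap s) : InTrap (x0Perm s) := by
  obtain ⟨_ | _, _ | _, _ | _, t, rfl⟩ := exists_eq_cons_cons_cons s <;> simp_all [InTrap]

end potential

inductive Letter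
  | x0 | x0inv | x1 | x1inv
  deriving DecidableEq

namespace Letter

def val : Letter → F
  | x0 => x 0
  | x0inv => (x 0)⁻¹
  | x1 => x 1
  | x1inv => (x 1)⁻¹

def weight : Letter → ℤ
  | x0 => -1
  | x0inv => 1
  | x1 => 0
  | x1inv => 1

lemma val_mem_gens (g : Letter) : g.val ∈ gens := by
  cases g <;> simp [val, gens]

lemma toPerm_val_mem (g : Letter) : toPerm g.val ∈ endpointStabilizer := by
  have h₁ := onTrue_mem_endpointStabilizer x0Perm_mem_endpointStabilizer
  cases g <;> simp [val, x0Perm_mem_endpointStabilizer, h₁]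

lemma potential_toPerm_val_le (g : Letter) {s : Stream' Bool} (hs : IsInterior s) :
    potential (toPerm g.val s) ≤ potential s + g.weight := by
  cases g <;> simp only [val, weight, map_inv, toPerm_x, xPerm_zero, xPerm_one]
  · rw [potential_x0Perm hs]; omega
  · rw [potential_x0Perm_inv hs]
  · simpa using potential_onTrue_x0Perm_le hs
  · exact potential_onTrue_x0Perm_inv_le hs

end Letter

instance : CanLift F Letter Letter.val (· ∈ gens) where
  prf a ha := by
    rcases ha with rfl | rfl | rfl | rfl
    exacts [⟨.x0, rfl⟩, ⟨.x0inv, rfl⟩, ⟨.x1, rfl⟩, ⟨.x1inv, rfl⟩]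

def evalWord (u : List Letter) : F := (u.map Letter.val).prod

@[simp] lemma evalWord_nil : evalWord [] = 1 := rfl

@[simp] lemma evalWord_cons (g : Letter) (u : List Letter) :
    evalWord (g :: u) = g.val * evalWord u := List.prod_cons

lemma len_evalWord {u : List Letter}
    (hmin : ∀ v : List Letter, evalWord v = evalWord u → u.length ≤ v.length) :
    len (evalWord u) = u.length := by
  have hu : u.length ∈ {m | ∃ w : List F, w.length = m ∧ (∀ a ∈ w, a ∈ gens) ∧
      w.prod = evalWord u} :=
    ⟨u.map Letter.val, List.length_map _, by simpa using fun g _ => g.val_mem_gens, rfl⟩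
  refine le_antisymm (Nat.sInf_le hu) (le_csInf ⟨_, hu⟩ ?_)
  rintro _ ⟨w, rfl, hw, hprod⟩
  lift w to List Letter using hw with v
  simpa using hmin v hprod

lemma toPerm_evalWord_mem (u : List Letter) : toPerm (evalWord u) ∈ endpointStabilizer := by
  induction u with
  | nil => simp [one_mem]
  | cons g u ih => simpa using mul_mem g.toPerm_val_mem ih

section word

variable (u : List Letter) {s : Stream' Bool}

lemma potential_toPerm_evalWord_le (hs : IsInterior s) :
    potential (toPerm (evalWord u) s) ≤ potential s + (u.map Letter.weight).sum := by
  induction u with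
  | nil => simp
  | cons g u ih =>
    have := g.potential_toPerm_val_le (hs.perm (toPerm_evalWord_mem u))
    simp only [evalWord_cons, map_mul, Equiv.Perm.mul_apply, List.map_cons, List.sum_cons]
    omega

lemma inTrap_toPerm_evalWord (hs : IsInterior s) (hx0inv : Letter.x0inv ∉ u)
    (hx1 : Letter.x1 ∈ u)
    (htight : potential (toPerm (evalWord u) s) = potential s + (u.map Letter.weight).sum) :
    InTrap (toPerm (evalWord u) s) := by
  induction u with
  | nil => simp at hx1
  | cons g u ih =>
    simp only [evalWord_cons, map_mul, Equiv.Perm.mul_apply, List.map_cons, List.sum_cons,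
      List.mem_cons, not_or] at htight hx0inv hx1 ⊢
    have ht : IsInterior (toPerm (evalWord u) s) := hs.perm (toPerm_evalWord_mem u)
    have hbudget := potential_toPerm_evalWord_le u hs
    cases g <;> simp only [Letter.val, Letter.weight, map_inv, toPerm_x, xPerm_zero,
      xPerm_one] at htight hx0inv hx1 ⊢
    · rw [potential_x0Perm ht] at htight
      exact inTrap_x0Perm (ih hx0inv.2 (by simpa using hx1) (by omega))
    · simp at hx0inv
    · have := potential_onTrue_x0Perm_le ht
      exact inTrap_onTrue_x0Perm ht (by omega)
    · have hle := potential_onTrue_x0Perm_inv_le ht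
      have htrap := ih hx0inv.2 (by simpa using hx1) (by omega)
      have := potential_onTrue_x0Perm_inv_le_of_inTrap ht htrap
      omega

lemma sum_weight :
    (u.map Letter.weight).sum = u.count .x0inv + u.count .x1inv - u.count .x0 := by
  induction u with
  | nil => simp
  | cons g u ih => cases g <;> simp [Letter.weight, ih] <;> ring

lemma length_eq_sum_count :
    u.length = u.count .x0 + u.count .x0inv + u.count .x1 + u.count .x1inv := by
  induction u with
  | nil => simp
  | cons g u ih => cases g <;> simp [ih] <;> ring

end word

def exponentSum (c₀ c₁ : ℤ) : F →* Multiplicative ℤ :=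
  PresentedGroup.toGroup (f := fun i => .ofAdd (if i = 0 then c₀ else c₁)) <| by
    rintro _ ⟨i, j, hij, rfl⟩
    simp only [map_mul, map_inv, FreeGroup.lift_apply_of, if_neg (by omega : j ≠ 0),
      if_neg (Nat.succ_ne_zero j)]
    rw [mul_inv_eq_one, mul_comm, mul_inv_cancel_left]

@[simp] lemma exponentSum_x_zero (c₀ c₁ : ℤ) : exponentSum c₀ c₁ (x 0) = .ofAdd c₀ :=
  PresentedGroup.toGroup.of _

@[simp] lemma exponentSum_x_one (c₀ c₁ : ℤ) : exponentSum c₀ c₁ (x 1) = .ofAdd c₁ :=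
  PresentedGroup.toGroup.of _

lemma toAdd_exponentSum_evalWord (c₀ c₁ : ℤ) (u : List Letter) :
    (exponentSum c₀ c₁ (evalWord u)).toAdd =
      c₀ * (u.count .x0 - u.count .x0inv) + c₁ * (u.count .x1 - u.count .x1inv) := by
  induction u with
  | nil => simp
  | cons g u ih => cases g <;> simp [Letter.val, ih] <;> ring

lemma toAdd_exponentSum_x_zero_mul_l (c₀ c₁ : ℤ) (n : ℕ) :
    (exponentSum c₀ c₁ (x 0 * l n)).toAdd = c₀ * n + c₁ * (1 - n) := by
  simp [l]
  ring

lemma x_zero_mul_l (n : ℕ) : x 0 * l n = (x 0)⁻¹ * x 1 * x 0 ^ (n + 1) * (x 1)⁻¹ ^ n := by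
  simp only [l, zpow_neg, zpow_natCast, inv_pow, zpow_add_one, zpow_ofNat]
  group

lemma x0Perm_pow_replicate_append (k : ℕ) (t : Stream' Bool) :
    (x0Perm ^ k) (List.replicate k true ++ₛ true :: t) = true :: t := by
  induction k generalizing t with
  | zero => rfl
  | succ k ih =>
    rw [pow_succ', Equiv.Perm.mul_apply, replicate_succ_append_stream, ih, x0Perm_true_true]

lemma onTrue_x0Perm_inv_pow (k : ℕ) (t : Stream' Bool) :
    ((onTrue x0Perm)⁻¹ ^ k) (true :: true :: t) = List.replicate k true ++ₛ true :: true :: t := by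
  induction k generalizing t with
  | zero => rfl
  | succ k ih =>
    rw [pow_succ, Equiv.Perm.mul_apply, onTrue_inv_true, x0Perm_inv_true, ih,
      replicate_succ_append_stream]

lemma toPerm_x_zero_mul_l_apply (n : ℕ) :
    toPerm (x 0 * l n) (true :: true :: const false) = true :: true :: const false := by
  simp only [x_zero_mul_l, map_mul, map_inv, map_pow, toPerm_x, xPerm_zero, xPerm_one,
    Equiv.Perm.mul_apply, onTrue_x0Perm_inv_pow, pow_succ', x0Perm_pow_replicate_append,
    x0Perm_true_true, onTrue_true, x0Perm_const_false, x0Perm_inv_true]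

lemma le_length_of_evalWord_eq {n : ℕ} {u : List Letter} (hu : evalWord u = x 0 * l n) :
    2 * n + 3 ≤ u.length := by
  set s : Stream' Bool := true :: true :: const false
  have hs : IsInterior s := by
    simp only [IsInterior, s, ne_eq, cons_eq_const_iff]
    exact ⟨by simp, fun h => Bool.false_ne_true (congrArg head h.2.2)⟩
  have hfix : toPerm (evalWord u) s = s := by rw [hu, toPerm_x_zero_mul_l_apply]
  have hbudget := potential_toPerm_evalWord_le u hs
  rw [hfix, sum_weight] at hbudget
  have h₀ := toAdd_exponentSum_evalWord 1 0 u
  have h₁ := toAdd_exponentSum_evalWord 0 1 u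
  rw [hu, toAdd_exponentSum_x_zero_mul_l] at h₀ h₁
  have hlength := length_eq_sum_count u
  by_contra hshort
  -- With `a, b, c, d` counting `x₀, x₀⁻¹, x₁, x₁⁻¹`: `a - b = n`, `c - d = 1 - n` and
  -- `b + d - a ≥ 0`, and the length `2n + 1 + 2 (b + d - a) + 2 b` is at most `2n + 2` only if
  -- `b = 0` and `b + d = a`, and then `c = 1`.
  have htrap := inTrap_toPerm_evalWord u hs (List.count_eq_zero.mp (by omega))
    (List.count_pos_iff.mp (by omega)) (by rw [hfix, sum_weight]; omega)
  rw [hfix] at htrap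
  simp [InTrap, s] at htrap

def x0MulLWord (n : ℕ) : List Letter :=
  .x0inv :: .x1 :: (List.replicate (n + 1) .x0 ++ List.replicate n .x1inv)

lemma evalWord_x0MulLWord (n : ℕ) : evalWord (x0MulLWord n) = x 0 * l n := by
  simp [x0MulLWord, evalWord, List.map_replicate, List.prod_replicate, Letter.val, x_zero_mul_l,
    mul_assoc]

lemma len_x_zero_mul_l (n : ℕ) : len (x 0 * l n) = 2 * n + 3 := by
  have hlength : (x0MulLWord n).length = 2 * n + 3 := by simp [x0MulLWord]; ring
  rw [← evalWord_x0MulLWord, len_evalWord, hlength]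
  intro v hv
  rw [hlength]
  exact le_length_of_evalWord_eq (hv.trans (evalWord_x0MulLWord n))

/-- For `n ≥ 1`, `ℓ(x₀ l) = 2n + 3`; consequently the two-step path
`l → x₀ l → x₀² l = r` leaves the ball `B_{2n+2}`. -/
theorem length_x0_l :
    ∀ n : ℕ, 1 ≤ n →
      len (x 0 * l n) = 2 * n + 3 ∧
      ¬ IsPathIn (2 * n + 2) (l n) (r n) 2 (fun k => x 0 ^ k * l n) := by
  intro n _
  refine ⟨len_x_zero_mul_l n, fun ⟨_, _, _, hball⟩ => ?_⟩
  have : len (x 0 * l n) ≤ 2 * n + 2 := by simpa using hball 1 one_le_two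
  rw [len_x_zero_mul_l] at this
  omega

end ThompsonF
end

section
/- For every integer n ≥ 1, with l := x_0^{-2} x_1 x_0^{n+1} x_1^{-n} and r := x_0^2 l in Thompson's group F, there exists a path from l to r of length 4n + 4 lying inside the ball B_{2n+2}; one such path is given by successively left-multiplying l by the letters of the word (x_1 x_0^{n+1})(x_1^{-1} x_0^{-n})(x_1^{-1} x_0^{n})(x_1 x_0^{1-n}), read from right to left. -/
/-! Write `n = m + 1`. The relations `x₀⁻ᵏ x₁ x₀ᵏ = x_{k+1}` and `x₁⁻ᵏ x₂ x₁ᵏ = x_{k+2}` turn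
`l` into `x₀ᵐ x₁^{-(m+1)} x₂` with `x₂ = x₀⁻¹ x₁ x₀`. Along the path each vertex keeps one of the
shapes `x₀ᵃ x₁⁻ᵇ x₂` with `a + b ≤ 2m + 1`, or `x₀ᵃ x₁⁻ᵇ` with `a + b ≤ 2m + 3`, until the last
step reaches `r = x₁ x₀^{m+2} x₁^{-(m+1)}`; each of these is spelled by a word of length at most
`2m + 4 = 2n + 2`. The only step that is not free cancellation is
`x₁⁻¹ · x₀^{m+1} x₁⁻ᵐ x₂ = x₀^{m+1} x₁⁻ᵐ`, obtained by moving `x₂` left past `x₁⁻ᵐ` (it becomes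
`x_{m+2}`) and then past `x₀^{m+1}` (it becomes `x₁`). -/

namespace ThompsonF

/-- The word `(x₁ x₀^{n+1})(x₁⁻¹ x₀⁻ⁿ)(x₁⁻¹ x₀ⁿ)(x₁ x₀^{1-n})`,
listed in right-to-left (application) order. -/
noncomputable def word4 (n : ℕ) : List F :=
  List.replicate (n - 1) (x 0)⁻¹ ++ [x 1] ++ List.replicate n (x 0) ++ [(x 1)⁻¹] ++
    List.replicate n (x 0)⁻¹ ++ [(x 1)⁻¹] ++ List.replicate (n + 1) (x 0) ++ [x 1]

lemma x_mul_x_of_lt {i j : ℕ} (h : i < j) : x j * x i = x i * x (j + 1) := by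
  have hrel : PresentedGroup.mk rels
      ((FreeGroup.of i)⁻¹ * FreeGroup.of j * FreeGroup.of i * (FreeGroup.of (j + 1))⁻¹) = 1 :=
    (QuotientGroup.eq_one_iff _).2 (Subgroup.subset_normalClosure ⟨i, j, h, rfl⟩)
  simp only [map_mul, map_inv] at hrel
  change (x i)⁻¹ * x j * x i * (x (j + 1))⁻¹ = 1 at hrel
  calc x j * x i = x i * ((x i)⁻¹ * x j * x i * (x (j + 1))⁻¹) * x (j + 1) := by group
    _ = x i * x (j + 1) := by rw [hrel]; group

lemma x_mul_x_pow_of_lt {i j : ℕ} (h : i < j) (k : ℕ) : x j * x i ^ k = x i ^ k * x (j + k) := by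
  induction k with
  | zero => simp
  | succ k ih =>
    rw [pow_succ, ← mul_assoc, ih, mul_assoc, x_mul_x_of_lt (by omega), ← mul_assoc, add_assoc]

lemma x_two_eq : x 2 = (x 0)⁻¹ * x 1 * x 0 := by
  rw [mul_assoc, x_mul_x_of_lt zero_lt_one]; group

lemma x_one_inv_pow_mul_x_two (k : ℕ) : (x 1)⁻¹ ^ k * x 2 = x (2 + k) * (x 1)⁻¹ ^ k := by
  rw [inv_pow, inv_mul_eq_iff_eq_mul, ← mul_assoc, ← x_mul_x_pow_of_lt one_lt_two]
  group

lemma l_succ_eq (m : ℕ) : l (m + 1) = x 0 ^ m * ((x 1)⁻¹ ^ (m + 1) * x 2) := by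
  have hpow : (x 0 ^ (2 : ℤ))⁻¹ * x 0 ^ (m + 2) = x 0 ^ m := by
    rw [zpow_ofNat]; group
  rw [l, x_one_inv_pow_mul_x_two, zpow_neg, zpow_neg, mul_assoc _ (x 1),
    show (((m + 1 : ℕ) : ℤ) + 1) = ((m + 2 : ℕ) : ℤ) by push_cast; ring, zpow_natCast,
    zpow_natCast, x_mul_x_pow_of_lt zero_lt_one, ← mul_assoc, hpow, inv_pow]
  group

lemma r_succ_eq (m : ℕ) : r (m + 1) = x 1 * (x 0 ^ (m + 2) * (x 1)⁻¹ ^ (m + 1)) := by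
  rw [r, l, zpow_neg, zpow_neg,
    show (((m + 1 : ℕ) : ℤ) + 1) = ((m + 2 : ℕ) : ℤ) by push_cast; ring, zpow_natCast,
    zpow_natCast, inv_pow]
  group

lemma x_one_inv_mul_x_zero_pow_mul (m : ℕ) :
    (x 1)⁻¹ * (x 0 ^ (m + 1) * ((x 1)⁻¹ ^ m * x 2)) = x 0 ^ (m + 1) * (x 1)⁻¹ ^ m := by
  have h := x_mul_x_pow_of_lt zero_lt_one (m + 1)
  rw [x_one_inv_pow_mul_x_two, ← mul_assoc (x 0 ^ (m + 1)), show 2 + m = 1 + (m + 1) by omega,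
    ← h]
  group

lemma word4_succ (m : ℕ) :
    word4 (m + 1) = List.replicate m (x 0)⁻¹ ++ ([x 1] ++ (List.replicate (m + 1) (x 0) ++
      ([(x 1)⁻¹] ++ (List.replicate (m + 1) (x 0)⁻¹ ++ ([(x 1)⁻¹] ++
        (List.replicate (m + 2) (x 0) ++ [x 1])))))) := by
  simp [word4]

lemma length_word4 {n : ℕ} (hn : 1 ≤ n) : (word4 n).length = 4 * n + 4 := by
  simp only [word4, List.length_append, List.length_replicate, List.length_singleton]
  omega

lemma inv_mem_gens {s : F} (hs : s ∈ gens) : s⁻¹ ∈ gens := by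
  simp only [gens, Set.mem_insert_iff, Set.mem_singleton_iff] at hs ⊢
  rcases hs with rfl | rfl | rfl | rfl <;> simp

lemma len_prod_le {w : List F} (hw : ∀ s ∈ w, s ∈ gens) : len w.prod ≤ w.length :=
  Nat.sInf_le ⟨w, rfl, hw, rfl⟩

lemma len_prod_mul_x_zero_pow_mul_x_one_inv_pow_mul_prod_le {u v : List F}
    (hu : ∀ s ∈ u, s ∈ gens) (hv : ∀ s ∈ v, s ∈ gens) (a b : ℕ) :
    len (u.prod * (x 0 ^ a * ((x 1)⁻¹ ^ b * v.prod))) ≤ u.length + a + b + v.length := by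
  have hw : ∀ s ∈ u ++ List.replicate a (x 0) ++ List.replicate b (x 1)⁻¹ ++ v, s ∈ gens := by
    simp only [List.mem_append, List.mem_replicate]
    rintro s (((hs | ⟨-, rfl⟩) | ⟨-, rfl⟩) | hs)
    · exact hu s hs
    · simp [gens]
    · simp [gens]
    · exact hv s hs
  simpa [List.prod_append, List.prod_replicate, mul_assoc, add_assoc] using len_prod_le hw

section Walk

variable {G : Type*} [Monoid G]

def walk (w : List G) (f : G) (k : ℕ) : G := (w.take k).reverse.prod * f

lemma walk_zero (w : List G) (f : G) : walk w f 0 = f := by simp [walk]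

lemma walk_length (w : List G) (f : G) : walk w f w.length = w.reverse.prod * f := by
  simp [walk]

lemma walk_append_of_le {u : List G} (v : List G) (f : G) {k : ℕ} (hk : k ≤ u.length) :
    walk (u ++ v) f k = walk u f k := by
  simp [walk, List.take_append_of_le_length hk]

lemma walk_append_length_add (u v : List G) (f : G) (j : ℕ) :
    walk (u ++ v) f (u.length + j) = walk v (u.reverse.prod * f) j := by
  simp [walk, List.take_append, List.take_of_length_le, mul_assoc]

lemma walk_replicate {p j : ℕ} (s f : G) (hj : j ≤ p) :
    walk (List.replicate p s) f j = s ^ j * f := by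
  simp [walk, List.take_replicate, min_eq_left hj]

end Walk

section Paths

variable {N : ℕ}

lemma IsPathIn.walk_append {f g h : F} {u v : List F}
    (hu : IsPathIn N f g u.length (walk u f)) (hv : IsPathIn N g h v.length (walk v g)) :
    IsPathIn N f h (u ++ v).length (walk (u ++ v) f) := by
  obtain ⟨-, hug, hu_step, hu_len⟩ := hu
  obtain ⟨-, hvh, hv_step, hv_len⟩ := hv
  rw [walk_length] at hug
  have hright (j : ℕ) : walk (u ++ v) f (u.length + j) = walk v g j := by
    rw [walk_append_length_add, hug]
  refine ⟨walk_zero _ _, by rw [List.length_append, hright, hvh], fun k hk => ?_, fun k hk => ?_⟩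
  · rcases lt_or_ge k u.length with hk' | hk'
    · rw [walk_append_of_le _ _ hk', walk_append_of_le _ _ hk'.le]
      exact hu_step k hk'
    · obtain ⟨j, rfl⟩ := Nat.exists_eq_add_of_le hk'
      rw [add_assoc, hright, hright]
      exact hv_step j (by simp at hk; omega)
  · rcases le_or_gt k u.length with hk' | hk'
    · rw [walk_append_of_le _ _ hk']
      exact hu_len k hk'
    · obtain ⟨j, rfl⟩ := Nat.exists_eq_add_of_le hk'.le
      rw [hright]
      exact hv_len j (by simp at hk; omega)

lemma isPathIn_walk_replicate {s f : F} (hs : s ∈ gens) {p : ℕ}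
    (hlen : ∀ j ≤ p, len (s ^ j * f) ≤ N) :
    IsPathIn N f (s ^ p * f) (List.replicate p s).length (walk (List.replicate p s) f) := by
  rw [List.length_replicate]
  refine ⟨walk_zero _ _, walk_replicate _ _ le_rfl, fun k hk => ?_, fun k hk => ?_⟩
  · rw [walk_replicate _ _ hk, walk_replicate _ _ hk.le, pow_succ']
    simpa [mul_assoc] using hs
  · rw [walk_replicate _ _ hk]
    exact hlen k hk

lemma isPathIn_walk_replicate_inv {s g : F} (hs : s ∈ gens) {p : ℕ}
    (hlen : ∀ j ≤ p, len (s ^ j * g) ≤ N) :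
    IsPathIn N (s ^ p * g) g (List.replicate p s⁻¹).length
      (walk (List.replicate p s⁻¹) (s ^ p * g)) := by
  have hcancel : ∀ j ≤ p, s⁻¹ ^ j * (s ^ p * g) = s ^ (p - j) * g := by
    intro j hj
    rw [← mul_assoc, inv_pow, ← Nat.sub_add_cancel hj, pow_add, Nat.add_sub_cancel]
    group
  have hpath := isPathIn_walk_replicate (N := N) (inv_mem_gens hs)
    fun j hj => (hcancel j hj).symm ▸ hlen (p - j) (Nat.sub_le p j)
  rwa [hcancel p le_rfl, Nat.sub_self, pow_zero, one_mul] at hpath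

lemma isPathIn_walk_singleton {s f g : F} (hs : s ∈ gens) (hf : len f ≤ N)
    (hsf : s * f = g) (hg : len g ≤ N) : IsPathIn N f g [s].length (walk [s] f) := by
  have hpath := isPathIn_walk_replicate (N := N) (f := f) (p := 1) hs fun j hj => by
    interval_cases j <;> simpa [hsf]
  rwa [pow_one, hsf] at hpath

end Paths

lemma len_x_zero_pow_mul_x_one_inv_pow_le (a b : ℕ) : len (x 0 ^ a * (x 1)⁻¹ ^ b) ≤ a + b := by
  simpa using len_prod_mul_x_zero_pow_mul_x_one_inv_pow_mul_prod_le (u := []) (v := [])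
    (by simp) (by simp) a b

lemma len_x_zero_pow_mul_x_one_inv_pow_mul_x_two_le (a b : ℕ) :
    len (x 0 ^ a * ((x 1)⁻¹ ^ b * x 2)) ≤ a + b + 3 := by
  simpa [x_two_eq, mul_assoc] using len_prod_mul_x_zero_pow_mul_x_one_inv_pow_mul_prod_le
    (u := []) (v := [(x 0)⁻¹, x 1, x 0]) (by simp) (by simp [gens]) a b

lemma len_x_one_mul_x_zero_pow_mul_x_one_inv_pow_le (a b : ℕ) :
    len (x 1 * (x 0 ^ a * (x 1)⁻¹ ^ b)) ≤ a + b + 1 := by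
  have h := len_prod_mul_x_zero_pow_mul_x_one_inv_pow_mul_prod_le (u := [x 1]) (v := [])
    (by simp [gens]) (by simp) a b
  simp only [List.prod_singleton, List.prod_nil, mul_one, List.length_singleton,
    List.length_nil, add_zero] at h
  omega

theorem isPathIn_word4_succ (m : ℕ) :
    IsPathIn (2 * m + 4) (l (m + 1)) (r (m + 1)) (word4 (m + 1)).length
      (walk (word4 (m + 1)) (l (m + 1))) := by
  have hx0 : x 0 ∈ gens := by simp [gens]
  have hx1 : x 1 ∈ gens := by simp [gens]
  have hx1' : (x 1)⁻¹ ∈ gens := inv_mem_gens hx1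
  have hA (a b : ℕ) (h : a + b ≤ 2 * m + 4) : len (x 0 ^ a * (x 1)⁻¹ ^ b) ≤ 2 * m + 4 :=
    (len_x_zero_pow_mul_x_one_inv_pow_le a b).trans h
  have hB (a b : ℕ) (h : a + b + 3 ≤ 2 * m + 4) :
      len (x 0 ^ a * ((x 1)⁻¹ ^ b * x 2)) ≤ 2 * m + 4 :=
    (len_x_zero_pow_mul_x_one_inv_pow_mul_x_two_le a b).trans h
  rw [word4_succ, l_succ_eq]
  refine (isPathIn_walk_replicate_inv hx0 fun j hj => hB j (m + 1) (by omega)).walk_append <|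
    (isPathIn_walk_singleton hx1 (by simpa using hB 0 (m + 1) (by omega))
      (by rw [pow_succ', mul_assoc, mul_inv_cancel_left])
      (by simpa using hB 0 m (by omega))).walk_append <|
    (isPathIn_walk_replicate hx0 fun j hj => hB j m (by omega)).walk_append <|
    (isPathIn_walk_singleton hx1' (hB (m + 1) m (by omega)) (x_one_inv_mul_x_zero_pow_mul m)
      (hA (m + 1) m (by omega))).walk_append <|
    (isPathIn_walk_replicate_inv hx0 fun j hj => hA j m (by omega)).walk_append <|
    (isPathIn_walk_singleton hx1' (by simpa using hA 0 m (by omega)) (pow_succ' _ _).symm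
      (by simpa using hA 0 (m + 1) (by omega))).walk_append <|
    (isPathIn_walk_replicate hx0 fun j hj => hA j (m + 1) (by omega)).walk_append <|
    isPathIn_walk_singleton hx1 (hA (m + 2) (m + 1) (by omega)) (r_succ_eq m).symm
      ((r_succ_eq m).symm ▸ (len_x_one_mul_x_zero_pow_mul_x_one_inv_pow_le _ _).trans (by omega))

/-- For `n ≥ 1` there is a path from `l` to `r` of length `4n + 4` inside `B_{2n+2}`;
one such path is obtained by successively left-multiplying `l` by the letters of
`(x₁ x₀^{n+1})(x₁⁻¹ x₀⁻ⁿ)(x₁⁻¹ x₀ⁿ)(x₁ x₀^{1-n})`, read from right to left. -/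
theorem path_of_length_4n4 :
    ∀ n : ℕ, 1 ≤ n →
      (∃ c : ℕ → F, IsPathIn (2 * n + 2) (l n) (r n) (4 * n + 4) c) ∧
      IsPathIn (2 * n + 2) (l n) (r n) (4 * n + 4)
        (fun k => ((word4 n).take k).reverse.prod * l n) := by
  intro n hn
  obtain ⟨m, rfl⟩ := Nat.exists_eq_add_of_le' hn
  have hpath := isPathIn_word4_succ m
  rw [length_word4 hn] at hpath
  exact ⟨⟨_, hpath⟩, hpath⟩

end ThompsonF
end
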